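/- arXiv:2602.16283 — 4 statements merged into one kernel-verified Lean document; each statement's English description precedes it below -/
import Mathlib

section
/- (Orthogonality of the Gumbel reparametrisation with transformed location parameter μ̃(ν,σ) = (1−γ)σ + C₁(ν).) For all μ ∈ ℝ and σ > 0, ∫_ℝ s_μ(x;μ,σ) · ((1−γ)·s_μ(x;μ,σ) + s_σ(x;μ,σ)) · f(x;μ,σ) dx = 0, where γ is the Euler–Mascheroni constant. Equivalently, the Fisher cross-information between the new parameters ν and σ vanishes, since the score in ν is C₁'(ν)·s_μ and the score in σ under the reparametrisation is (1−γ)·s_μ + s_σ by the chain rule. -/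
open MeasureTheory Real

/-- Gumbel(μ,σ) density. -/
noncomputable def gumbelPdf (μ σ x : ℝ) : ℝ :=
  (1 / σ) * Real.exp (-((x - μ) / σ)) * Real.exp (-Real.exp (-((x - μ) / σ)))

/-- Score of the Gumbel distribution with respect to the location parameter μ. -/
noncomputable def gumbelScoreMu (μ σ x : ℝ) : ℝ :=
  (1 / σ) * (1 - Real.exp (-((x - μ) / σ)))

/-- Score of the Gumbel distribution with respect to the scale parameter σ. -/
noncomputable def gumbelScoreSigma (μ σ x : ℝ) : ℝ :=
  ((x - μ) / σ ^ 2) * (1 - Real.exp (-((x - μ) / σ))) - 1 / σ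

/-!
If `X` has density `gumbelPdf μ σ`, then `U = exp (-((X - μ) / σ))` is standard exponential, with
`σ s_μ = 1 - U` and `σ s_σ = -(1 - U) log U - 1`. The integral thus reduces to the moments
`∫ uⁿ e⁻ᵘ du = Γ(n + 1) = n!` and `∫ uⁿ log u e⁻ᵘ du = Γ'(n + 1) = n! (H_n - γ)` for `n ≤ 2`,
and `1 - γ` is exactly the coefficient that makes them cancel.
-/

open Set Asymptotics
open scoped Topology Nat

theorem integrableOn_pow_mul_exp_neg_Ioi (n : ℕ) :
    IntegrableOn (fun t : ℝ => t ^ n * exp (-t)) (Ioi 0) :=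
  (GammaIntegral_convergent (s := n + 1) (by positivity)).congr_fun
    (fun t _ => by simp [mul_comm]) measurableSet_Ioi

theorem integral_pow_mul_exp_neg_Ioi (n : ℕ) :
    ∫ t in Ioi (0 : ℝ), t ^ n * exp (-t) = n ! := by
  rw [← Gamma_nat_eq_factorial, Gamma_eq_integral (by positivity)]
  exact setIntegral_congr_fun measurableSet_Ioi fun t _ => by simp [mul_comm]

theorem mellinConvergent_log_smul_exp_neg {s : ℂ} (hs : 0 < s.re) :
    MellinConvergent (fun t : ℝ => log t • ((exp (-t) : ℝ) : ℂ)) s := by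
  have hexp : Continuous fun t : ℝ => ((exp (-t) : ℝ) : ℂ) := by fun_prop
  refine (mellin_hasDerivAt_of_isBigO_rpow (a := s.re + 1) (b := 0)
    (hexp.continuousOn.locallyIntegrableOn measurableSet_Ioi) ?_ (lt_add_one _) ?_ hs).1
  · rw [← isBigO_norm_left]
    simp_rw [Complex.norm_real, isBigO_norm_left]
    simpa only [neg_one_mul] using (isLittleO_exp_neg_mul_rpow_atTop zero_lt_one _).isBigO
  · simp_rw [neg_zero, rpow_zero]
    exact isBigO_const_of_tendsto ((hexp.tendsto 0).mono_left nhdsWithin_le_nhds) (by simp)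

theorem integrableOn_pow_mul_log_mul_exp_neg_Ioi (n : ℕ) :
    IntegrableOn (fun t : ℝ => t ^ n * log t * exp (-t)) (Ioi 0) := by
  have hs : 0 < ((n : ℂ) + 1).re := by simpa using n.cast_add_one_pos
  have h : IntegrableOn (fun t : ℝ => ((t ^ n * log t * exp (-t) : ℝ) : ℂ)) (Ioi 0) := by
    refine (mellinConvergent_log_smul_exp_neg hs).congr_fun (fun t _ => ?_) measurableSet_Ioi
    simp only [add_sub_cancel_right, Complex.cpow_natCast, Complex.ofReal_exp, Complex.ofReal_neg,
      Complex.real_smul, smul_eq_mul, Complex.ofReal_mul, Complex.ofReal_pow]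
    ring
  simpa only [IntegrableOn, RCLike.re_to_complex, Complex.ofReal_re] using h.re

theorem integral_pow_mul_log_mul_exp_neg_Ioi (n : ℕ) :
    ∫ t in Ioi (0 : ℝ), t ^ n * log t * exp (-t) =
      n ! * (-eulerMascheroniConstant + harmonic n) := by
  have hs : 0 < ((n : ℂ) + 1).re := by simpa using n.cast_add_one_pos
  have hGamma : Complex.Gamma =ᶠ[𝓝 ((n : ℂ) + 1)] Complex.GammaIntegral := by
    filter_upwards [(isOpen_lt continuous_const Complex.continuous_re).mem_nhds hs] with s hs
    exact Complex.Gamma_eq_integral hs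
  have hderiv := ((Complex.hasDerivAt_GammaIntegral hs).congr_of_eventuallyEq hGamma).unique
    (Complex.hasDerivAt_Gamma_nat n)
  have hreal : ∫ t in Ioi (0 : ℝ), (t : ℂ) ^ ((n : ℂ) + 1 - 1) * (log t * exp (-t)) =
      ((∫ t in Ioi (0 : ℝ), t ^ n * log t * exp (-t) : ℝ) : ℂ) := by
    rw [← integral_complex_ofReal]
    refine setIntegral_congr_fun measurableSet_Ioi fun t _ => ?_
    simp only [add_sub_cancel_right, Complex.cpow_natCast, Complex.ofReal_exp, Complex.ofReal_neg,
      Complex.ofReal_mul, Complex.ofReal_pow]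
    ring
  rw [hreal] at hderiv
  exact_mod_cast hderiv

theorem integral_sum_mul_pow_mul_exp_neg_Ioi {ι : Type*} (s : Finset ι) (c : ι → ℝ) (k : ι → ℕ) :
    ∫ t in Ioi (0 : ℝ), ∑ i ∈ s, c i * (t ^ k i * exp (-t)) = ∑ i ∈ s, c i * (k i)! := by
  rw [integral_finsetSum s fun i _ => (integrableOn_pow_mul_exp_neg_Ioi (k i)).const_mul (c i)]
  simp_rw [integral_const_mul, integral_pow_mul_exp_neg_Ioi]

theorem integral_sum_mul_pow_mul_log_mul_exp_neg_Ioi {ι : Type*} (s : Finset ι) (c : ι → ℝ)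
    (k : ι → ℕ) :
    ∫ t in Ioi (0 : ℝ), ∑ i ∈ s, c i * (t ^ k i * log t * exp (-t)) =
      ∑ i ∈ s, c i * ((k i)! * (-eulerMascheroniConstant + harmonic (k i))) := by
  rw [integral_finsetSum s fun i _ =>
    (integrableOn_pow_mul_log_mul_exp_neg_Ioi (k i)).const_mul (c i)]
  simp_rw [integral_const_mul, integral_pow_mul_log_mul_exp_neg_Ioi]

theorem integral_exp_neg_smul_comp_exp_neg {E : Type*} [NormedAddCommGroup E] [NormedSpace ℝ E]
    (g : ℝ → E) : ∫ t, exp (-t) • g (exp (-t)) = ∫ u in Ioi 0, g u := by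
  have himage : (fun t => exp (-t)) '' univ = Ioi 0 := by
    rw [image_univ, ← range_exp]
    exact neg_surjective.range_comp exp
  rw [← himage, integral_image_eq_integral_abs_deriv_smul MeasurableSet.univ
    (fun t _ => (hasDerivAt_neg t).exp.hasDerivWithinAt)
    (fun a _ b _ h => neg_injective (exp_injective h)), Measure.restrict_univ]
  simp_rw [mul_neg_one, abs_neg, abs_of_pos (exp_pos _)]

theorem integral_comp_exp_neg_mul_gumbelPdf (μ : ℝ) {σ : ℝ} (hσ : 0 < σ) (F : ℝ → ℝ) :
    ∫ x, F (exp (-((x - μ) / σ))) * gumbelPdf μ σ x = ∫ u in Ioi 0, F u * exp (-u) := by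
  set G : ℝ → ℝ := fun t => exp (-t) * (F (exp (-t)) * exp (-exp (-t)))
  calc ∫ x, F (exp (-((x - μ) / σ))) * gumbelPdf μ σ x
      = σ⁻¹ * ∫ x, G ((x - μ) / σ) := by
        rw [← integral_const_mul]
        congr 1 with x
        simp only [G, gumbelPdf]
        ring
    _ = σ⁻¹ * ∫ x, G (x / σ) := by rw [integral_sub_right_eq_self (fun x => G (x / σ)) μ]
    _ = ∫ t, G t := by
        rw [Measure.integral_comp_div, abs_of_pos hσ, smul_eq_mul, inv_mul_cancel_left₀ hσ.ne']
    _ = ∫ u in Ioi 0, F u * exp (-u) := integral_exp_neg_smul_comp_exp_neg fun u => F u * exp (-u)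

theorem integral_gumbel_orthogonality_Ioi :
    ∫ u in Ioi (0 : ℝ),
      (1 - u) * ((1 - eulerMascheroniConstant - log u) * (1 - u) - 1) * exp (-u) = 0 := by
  set γ := eulerMascheroniConstant
  have hsplit : ∀ u : ℝ, (1 - u) * ((1 - γ - log u) * (1 - u) - 1) * exp (-u) =
      ∑ i : Fin 3, ![-γ, 2 * γ - 1, 1 - γ] i * (u ^ (i : ℕ) * exp (-u)) +
      ∑ i : Fin 3, ![-1, 2, -1] i * (u ^ (i : ℕ) * log u * exp (-u)) := by
    intro u
    simp only [Fin.sum_univ_three, Fin.val_zero, Fin.val_one, Fin.val_two, Matrix.cons_val]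
    ring
  simp_rw [hsplit]
  rw [integral_add
    (integrable_finsetSum _ fun i _ => (integrableOn_pow_mul_exp_neg_Ioi _).const_mul _)
    (integrable_finsetSum _ fun i _ => (integrableOn_pow_mul_log_mul_exp_neg_Ioi _).const_mul _),
    integral_sum_mul_pow_mul_exp_neg_Ioi, integral_sum_mul_pow_mul_log_mul_exp_neg_Ioi]
  simp only [Fin.sum_univ_three, Fin.val_zero, Fin.val_one, Fin.val_two, Matrix.cons_val]
  norm_num [harmonic_succ]
  ring

theorem gumbel_orthogonal_location_reparam (μ σ : ℝ) (hσ : 0 < σ) :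
    ∫ x : ℝ, gumbelScoreMu μ σ x *
        ((1 - Real.eulerMascheroniConstant) * gumbelScoreMu μ σ x + gumbelScoreSigma μ σ x) *
        gumbelPdf μ σ x = 0 := by
  set γ := eulerMascheroniConstant
  set K : ℝ → ℝ := fun u => (1 - u) * ((1 - γ - log u) * (1 - u) - 1)
  have hscores : ∀ x, gumbelScoreMu μ σ x * ((1 - γ) * gumbelScoreMu μ σ x +
      gumbelScoreSigma μ σ x) * gumbelPdf μ σ x =
      (σ ^ 2)⁻¹ * (K (exp (-((x - μ) / σ))) * gumbelPdf μ σ x) := by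
    intro x
    simp only [K, gumbelScoreMu, gumbelScoreSigma, log_exp]
    field_simp
    ring
  rw [funext hscores, integral_const_mul, integral_comp_exp_neg_mul_gumbelPdf μ hσ K,
    integral_gumbel_orthogonality_Ioi, mul_zero]
end

section
/- Let σ > 0, ξ > 0, and let k, n be natural numbers. Then ∫_0^∞ (ξx/σ)^{−k/ξ} · (log(ξx/σ))^n · f(x;σ,ξ) dx = (−ξ)^n · Γ^{(n)}(k+1), where Γ^{(n)} denotes the n-th derivative of the real Gamma function. -/
open MeasureTheory Real

/-- Density of the two-parameter GEV distribution GEV₂(σ,ξ), for x > 0 and ξ > 0. -/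
noncomputable def gev2Pdf (σ ξ x : ℝ) : ℝ :=
  (1 / σ) * (ξ * x / σ) ^ (-1 - 1 / ξ) * Real.exp (-(ξ * x / σ) ^ (-1 / ξ))

/-!
The substitution `t = (ξx/σ)^(-1/ξ)` carries GEV₂(σ,ξ) to the standard exponential law and
turns the weight `(ξx/σ)^(-k/ξ) (log (ξx/σ))^n` into `t^k (-ξ log t)^n`. The integral is
therefore `(-ξ)^n ∫₀^∞ t^k (log t)^n e^(-t) dt`, and differentiating the Mellin integral
`Γ(s) = ∫₀^∞ t^(s-1) e^(-t) dt` `n` times under the integral sign identifies this with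
`(-ξ)^n Γ^(n)(k+1)`.
-/

open Set Filter Asymptotics Topology

theorem mellin_ofReal_ofReal (f : ℝ → ℝ) (s : ℝ) :
    mellin (fun t => (f t : ℂ)) s = ↑(∫ t in Ioi 0, t ^ (s - 1) * f t) := by
  rw [mellin, ← integral_complex_ofReal]
  refine setIntegral_congr_fun measurableSet_Ioi fun t ht => ?_
  rw [smul_eq_mul, Complex.ofReal_mul, Complex.ofReal_cpow (le_of_lt ht)]
  push_cast
  rfl

noncomputable def logPowMulExpNeg (n : ℕ) (t : ℝ) : ℝ :=
  log t ^ n * exp (-t)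

namespace logPowMulExpNeg

theorem succ (n : ℕ) (t : ℝ) : logPowMulExpNeg (n + 1) t = log t • logPowMulExpNeg n t := by
  rw [logPowMulExpNeg, logPowMulExpNeg, pow_succ, smul_eq_mul]
  ring

theorem continuousOn (n : ℕ) : ContinuousOn (logPowMulExpNeg n) (Ioi 0) :=
  ((continuousOn_log.mono fun _ ht => ne_of_gt ht).pow n).mul
    (continuous_exp.comp continuous_neg).continuousOn

theorem isBigO_atTop (n : ℕ) (a : ℝ) : logPowMulExpNeg n =O[atTop] (· ^ (-a)) := by
  induction n generalizing a with
  | zero =>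
    refine (isLittleO_exp_neg_mul_rpow_atTop one_pos (-a)).isBigO.congr_left fun t => ?_
    simp [logPowMulExpNeg]
  | succ n ih =>
    simpa only [← succ] using isBigO_rpow_top_log_smul (lt_add_one a) (ih (a + 1))

theorem isBigO_nhdsGT_zero (n : ℕ) {b : ℝ} (hb : 0 < b) :
    logPowMulExpNeg n =O[𝓝[>] 0] (· ^ (-b)) := by
  induction n generalizing b with
  | zero =>
    refine IsBigO.of_bound 1 ?_
    filter_upwards [Ioo_mem_nhdsGT zero_lt_one] with t ht
    have hexp : exp (-t) ≤ 1 := exp_le_one_iff.mpr (by linarith [ht.1])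
    have hrpow : 1 ≤ t ^ (-b) := one_le_rpow_of_pos_of_le_one_of_nonpos ht.1 ht.2.le (by linarith)
    simp only [logPowMulExpNeg, pow_zero, one_mul, norm_eq_abs, abs_exp]
    exact hexp.trans (hrpow.trans (le_abs_self _))
  | succ n ih =>
    simpa only [← succ] using isBigO_rpow_zero_log_smul (half_lt_self hb) (ih (half_pos hb))

theorem hasDerivAt_mellin (n : ℕ) {s : ℂ} (hs : 0 < s.re) :
    HasDerivAt (mellin fun t => (logPowMulExpNeg n t : ℂ))
      (mellin (fun t => (logPowMulExpNeg (n + 1) t : ℂ)) s) s := by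
  have h := (mellin_hasDerivAt_of_isBigO_rpow (f := fun t => (logPowMulExpNeg n t : ℂ))
    ((Complex.continuous_ofReal.comp_continuousOn (continuousOn n)).locallyIntegrableOn
      measurableSet_Ioi)
    (Complex.isBigO_ofReal_left.mpr (isBigO_atTop n (s.re + 1))) (lt_add_one _)
    (Complex.isBigO_ofReal_left.mpr (isBigO_nhdsGT_zero n (half_pos hs))) (half_lt_self hs)).2
  have hsucc : (fun t => log t • (logPowMulExpNeg n t : ℂ)) =
      fun t => (logPowMulExpNeg (n + 1) t : ℂ) := by
    funext t
    rw [succ, smul_eq_mul, Complex.ofReal_mul, Complex.real_smul]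
  rwa [hsucc] at h

end logPowMulExpNeg

theorem iteratedDeriv_Gamma_eq_integral (n : ℕ) {s : ℝ} (hs : 0 < s) :
    iteratedDeriv n Gamma s = ∫ t in Ioi 0, t ^ (s - 1) * logPowMulExpNeg n t := by
  induction n generalizing s with
  | zero =>
    rw [iteratedDeriv_zero, Gamma_eq_integral hs]
    refine setIntegral_congr_fun measurableSet_Ioi fun t _ => ?_
    simp [logPowMulExpNeg, mul_comm]
  | succ n ih =>
    have hderiv : HasDerivAt (fun s : ℝ => ∫ t in Ioi 0, t ^ (s - 1) * logPowMulExpNeg n t)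
        (∫ t in Ioi 0, t ^ (s - 1) * logPowMulExpNeg (n + 1) t) s := by
      simpa only [mellin_ofReal_ofReal, Complex.ofReal_re] using
        (logPowMulExpNeg.hasDerivAt_mellin n (s := s) (by simpa using hs)).real_of_complex
    rw [iteratedDeriv_succ, ← hderiv.deriv]
    exact EventuallyEq.deriv_eq (eventually_of_mem (Ioi_mem_nhds hs) fun x hx => ih hx)

/-- Under GEV₂(σ,ξ) the variable `(ξX/σ)^(-1/ξ)` is standard exponential. -/
theorem integral_comp_mul_gev2Pdf (g : ℝ → ℝ) {σ ξ : ℝ} (hσ : 0 < σ) (hξ : 0 < ξ) :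
    ∫ x in Ioi 0, g ((ξ * x / σ) ^ (-1 / ξ)) * gev2Pdf σ ξ x =
      ∫ t in Ioi 0, g t * exp (-t) := by
  set G : ℝ → ℝ := fun u =>
    g (u ^ (-1 / ξ)) * ((1 / σ) * u ^ (-1 - 1 / ξ) * exp (-u ^ (-1 / ξ)))
  have hc : 0 < ξ / σ := div_pos hξ hσ
  have hG : ∀ t ∈ Ioi (0 : ℝ),
      (|-ξ| * t ^ (-ξ - 1)) • G (t ^ (-ξ)) = ξ / σ * (g t * exp (-t)) := by
    intro t ht
    have ht : 0 < t := ht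
    have hinv : (t ^ (-ξ)) ^ (-1 / ξ) = t := by
      rw [← rpow_mul ht.le, show -ξ * (-1 / ξ) = 1 by field_simp, rpow_one]
    have hpow : t ^ (-ξ - 1) * (t ^ (-ξ)) ^ (-1 - 1 / ξ) = 1 := by
      rw [← rpow_mul ht.le, ← rpow_add ht,
        show -ξ - 1 + -ξ * (-1 - 1 / ξ) = 0 by field_simp; ring, rpow_zero]
    simp only [G, smul_eq_mul, hinv, abs_neg, abs_of_pos hξ]
    linear_combination (ξ / σ * g t * exp (-t)) * hpow
  calc ∫ x in Ioi 0, g ((ξ * x / σ) ^ (-1 / ξ)) * gev2Pdf σ ξ x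
      = ∫ x in Ioi 0, G (ξ / σ * x) := by simp only [G, gev2Pdf, div_mul_eq_mul_div]
    _ = (ξ / σ)⁻¹ * ∫ u in Ioi 0, G u := by simpa using integral_comp_mul_left_Ioi G 0 hc
    _ = (ξ / σ)⁻¹ * ∫ t in Ioi 0, (|-ξ| * t ^ (-ξ - 1)) • G (t ^ (-ξ)) := by
      rw [integral_comp_rpow_Ioi G (neg_ne_zero.2 hξ.ne')]
    _ = (ξ / σ)⁻¹ * ∫ t in Ioi 0, ξ / σ * (g t * exp (-t)) := by
      rw [setIntegral_congr_fun measurableSet_Ioi hG]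
    _ = ∫ t in Ioi 0, g t * exp (-t) := by rw [integral_const_mul, inv_mul_cancel_left₀ hc.ne']

theorem gev2_moment_identity (σ ξ : ℝ) (hσ : 0 < σ) (hξ : 0 < ξ) (k n : ℕ) :
    ∫ x in Set.Ioi (0 : ℝ),
        (ξ * x / σ) ^ (-(k : ℝ) / ξ) * (Real.log (ξ * x / σ)) ^ n * gev2Pdf σ ξ x
      = (-ξ) ^ n * iteratedDeriv n Real.Gamma ((k : ℝ) + 1) := by
  set g : ℝ → ℝ := fun t => t ^ k * (-ξ * log t) ^ n
  have hsubst : ∀ x ∈ Ioi (0 : ℝ),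
      (ξ * x / σ) ^ (-(k : ℝ) / ξ) * log (ξ * x / σ) ^ n * gev2Pdf σ ξ x =
        g ((ξ * x / σ) ^ (-1 / ξ)) * gev2Pdf σ ξ x := by
    intro x hx
    have hu : 0 < ξ * x / σ := by have : 0 < x := hx; positivity
    have hpow : ((ξ * x / σ) ^ (-1 / ξ)) ^ k = (ξ * x / σ) ^ (-(k : ℝ) / ξ) := by
      rw [← rpow_natCast, ← rpow_mul hu.le]
      ring_nf
    have hlog : -ξ * log ((ξ * x / σ) ^ (-1 / ξ)) = log (ξ * x / σ) := by
      rw [log_rpow hu]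
      field_simp
    simp only [g, hpow, hlog]
  rw [setIntegral_congr_fun measurableSet_Ioi hsubst, integral_comp_mul_gev2Pdf g hσ hξ,
    iteratedDeriv_Gamma_eq_integral n (by positivity), ← integral_const_mul]
  refine setIntegral_congr_fun measurableSet_Ioi fun t _ => ?_
  rw [add_sub_cancel_right, rpow_natCast, logPowMulExpNeg]
  ring
end

section
/- Let σ > 0 and ξ > 0. Then the Fisher information cross entry i_{σξ} of the GEV₂(σ,ξ) distribution satisfies ∫_0^∞ s_σ(x;σ,ξ) · s_ξ(x;σ,ξ) · f(x;σ,ξ) dx = −(1−γ)/(σξ²) − 1/(σξ³), where γ is the Euler–Mascheroni constant. -/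
/-!
Substituting `x = (σ / ξ) t ^ (-ξ)` turns GEV₂(σ, ξ) into the standard exponential distribution,
and the scores into `s_σ = (1 - t) / (ξ σ)` and `s_ξ = ((-ξ log t - 1)(1 - t) - ξ) / ξ²`. The
integrand becomes `(p(t) + q(t) log t) e^{-t}` with quadratic polynomials `p`, `q`, and the moments
`∫ t^k e^{-t} = Γ(k + 1) = k!` and `∫ t^k log t e^{-t} = Γ'(k + 1) = k! (H_k - γ)` finish the
computation.
-/

open MeasureTheory Real

/-- Score of the GEV₂ distribution with respect to the scale parameter σ. -/
noncomputable def gev2ScoreSigma (σ ξ x : ℝ) : ℝ :=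
  (1 / (ξ * σ)) * (1 - (ξ * x / σ) ^ (-1 / ξ))

/-- Score of the GEV₂ distribution with respect to the shape parameter ξ. -/
noncomputable def gev2ScoreXi (σ ξ x : ℝ) : ℝ :=
  (1 / ξ ^ 2) * (Real.log (ξ * x / σ) - 1) * (1 - (ξ * x / σ) ^ (-1 / ξ)) - 1 / ξ

open Set
open scoped Nat

lemma integrableOn_rpow_mul_exp_neg {s : ℝ} (hs : -1 < s) :
    IntegrableOn (fun t : ℝ => t ^ s * exp (-t)) (Ioi 0) := by
  refine (GammaIntegral_convergent (s := s + 1) (by linarith)).congr_fun (fun t _ => ?_)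
    measurableSet_Ioi
  rw [add_sub_cancel_right, mul_comm]

lemma integrableOn_pow_mul_exp_neg (k : ℕ) :
    IntegrableOn (fun t : ℝ => t ^ k * exp (-t)) (Ioi 0) := by
  simpa using integrableOn_rpow_mul_exp_neg (s := k) (by linarith [k.cast_nonneg (α := ℝ)])

lemma integral_pow_mul_exp_neg (k : ℕ) : ∫ t in Ioi (0 : ℝ), t ^ k * exp (-t) = k ! := by
  rw [← Gamma_nat_eq_factorial, Gamma_eq_integral (by positivity)]
  refine setIntegral_congr_fun measurableSet_Ioi (fun t _ => ?_)
  rw [add_sub_cancel_right, rpow_natCast, mul_comm]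

lemma abs_log_le_rpow_add_rpow {t : ℝ} (ht : 0 < t) :
    |log t| ≤ 2 * (t ^ (-(1 / 2) : ℝ) + t ^ (1 / 2 : ℝ)) := by
  have hlog : log t ≤ 2 * t ^ (1 / 2 : ℝ) := by
    simpa [div_div_eq_mul_div, mul_comm] using log_le_rpow_div ht.le (ε := 1 / 2) (by norm_num)
  have hlog_inv : -log t ≤ 2 * t ^ (-(1 / 2) : ℝ) := by
    simpa [rpow_neg ht.le, inv_rpow ht.le, div_div_eq_mul_div, mul_comm]
      using log_le_rpow_div (inv_pos.2 ht).le (ε := 1 / 2) (by norm_num)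
  have hroot : 0 ≤ t ^ (1 / 2 : ℝ) := by positivity
  have hroot_inv : 0 ≤ t ^ (-(1 / 2) : ℝ) := by positivity
  exact abs_le.2 ⟨by linarith, by linarith⟩

lemma integrableOn_rpow_mul_log_mul_exp_neg {s : ℝ} (hs : -1 / 2 < s) :
    IntegrableOn (fun t : ℝ => t ^ s * log t * exp (-t)) (Ioi 0) := by
  have hdom := ((integrableOn_rpow_mul_exp_neg (s := s - 1 / 2) (by linarith)).add
    (integrableOn_rpow_mul_exp_neg (s := s + 1 / 2) (by linarith))).const_mul 2
  refine hdom.mono' (by fun_prop)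
    ((ae_restrict_iff' measurableSet_Ioi).2 (.of_forall fun t ht => ?_))
  have ht : (0 : ℝ) < t := ht
  calc ‖t ^ s * log t * exp (-t)‖ = t ^ s * |log t| * exp (-t) := by
        simp only [norm_mul, norm_eq_abs, abs_of_pos (rpow_pos_of_pos ht s), abs_of_pos (exp_pos _)]
    _ ≤ t ^ s * (2 * (t ^ (-(1 / 2) : ℝ) + t ^ (1 / 2 : ℝ))) * exp (-t) := by
        gcongr; exact abs_log_le_rpow_add_rpow ht
    _ = 2 * (t ^ (s - 1 / 2) * exp (-t) + t ^ (s + 1 / 2) * exp (-t)) := by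
        rw [sub_eq_add_neg, rpow_add ht, rpow_add ht]; ring

lemma integrableOn_pow_mul_log_mul_exp_neg (k : ℕ) :
    IntegrableOn (fun t : ℝ => t ^ k * log t * exp (-t)) (Ioi 0) := by
  simpa using integrableOn_rpow_mul_log_mul_exp_neg (s := k) (by linarith [k.cast_nonneg (α := ℝ)])

lemma integral_pow_mul_log_mul_exp_neg (k : ℕ) :
    ∫ t in Ioi (0 : ℝ), t ^ k * log t * exp (-t)
      = k ! * (-eulerMascheroniConstant + harmonic k) := by
  have hs : 0 < ((k : ℂ) + 1).re := by
    simp only [Complex.add_re, Complex.natCast_re, Complex.one_re]; positivity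
  have hderiv : HasDerivAt Complex.Gamma
      (∫ t in Ioi (0 : ℝ), (t : ℂ) ^ ((k : ℂ) + 1 - 1) * (log t * exp (-t))) (k + 1) := by
    refine (Complex.hasDerivAt_GammaIntegral hs).congr_of_eventuallyEq ?_
    filter_upwards [(Complex.continuous_re.isOpen_preimage _ isOpen_Ioi).mem_nhds hs] with s hs
    exact Complex.Gamma_eq_integral hs
  rw [← Complex.ofReal_inj, ← integral_complex_ofReal]
  push_cast
  rw [← hderiv.unique (Complex.hasDerivAt_Gamma_nat k)]
  refine setIntegral_congr_fun measurableSet_Ioi (fun t _ => ?_)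
  rw [add_sub_cancel_right, Complex.cpow_natCast, mul_assoc, Complex.ofReal_exp, Complex.ofReal_neg]

section FiniteSums

variable {n : ℕ} (c : Fin n → ℝ)

lemma integrableOn_sum_pow_mul_exp_neg :
    IntegrableOn (fun t : ℝ => (∑ i, c i * t ^ (i : ℕ)) * exp (-t)) (Ioi 0) := by
  simp_rw [Finset.sum_mul, mul_assoc (c _)]
  exact integrable_finsetSum _ fun i _ => (integrableOn_pow_mul_exp_neg i).const_mul (c i)

lemma integral_sum_pow_mul_exp_neg :
    ∫ t in Ioi (0 : ℝ), (∑ i, c i * t ^ (i : ℕ)) * exp (-t) = ∑ i, c i * (i : ℕ)! := by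
  simp_rw [Finset.sum_mul, mul_assoc (c _)]
  rw [integral_finsetSum _ fun (i : Fin n) _ => (integrableOn_pow_mul_exp_neg i).const_mul (c i)]
  simp_rw [integral_const_mul, integral_pow_mul_exp_neg]

lemma integrableOn_sum_pow_mul_log_mul_exp_neg :
    IntegrableOn (fun t : ℝ => (∑ i, c i * t ^ (i : ℕ)) * log t * exp (-t)) (Ioi 0) := by
  simp_rw [Finset.sum_mul, mul_assoc (c _)]
  exact integrable_finsetSum _ fun i _ => (integrableOn_pow_mul_log_mul_exp_neg i).const_mul (c i)

lemma integral_sum_pow_mul_log_mul_exp_neg :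
    ∫ t in Ioi (0 : ℝ), (∑ i, c i * t ^ (i : ℕ)) * log t * exp (-t)
      = ∑ i, c i * ((i : ℕ)! * (-eulerMascheroniConstant + harmonic i)) := by
  simp_rw [Finset.sum_mul, mul_assoc (c _)]
  rw [integral_finsetSum _ fun (i : Fin n) _ =>
    (integrableOn_pow_mul_log_mul_exp_neg i).const_mul (c i)]
  simp_rw [integral_const_mul, integral_pow_mul_log_mul_exp_neg]

end FiniteSums

lemma mul_div_mul_div_cancel {a b : ℝ} (ha : a ≠ 0) (hb : b ≠ 0) (y : ℝ) :
    a * (b / a * y) / b = y := by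
  field_simp

lemma rpow_neg_rpow_neg_one_div {ξ t : ℝ} (hξ : ξ ≠ 0) (ht : 0 ≤ t) :
    (t ^ (-ξ)) ^ (-1 / ξ) = t := by
  rw [← rpow_mul ht, show -ξ * (-1 / ξ) = 1 by field_simp, rpow_one]

section Standardization

variable {σ ξ t : ℝ}

lemma gev2Pdf_div_mul_rpow_neg (hσ : 0 < σ) (hξ : 0 < ξ) (ht : 0 < t) :
    gev2Pdf σ ξ (σ / ξ * t ^ (-ξ)) = t ^ (ξ + 1) * exp (-t) / σ := by
  have hpow : (t ^ (-ξ)) ^ (-1 - 1 / ξ) = t ^ (ξ + 1) := by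
    rw [← rpow_mul ht.le]; congr 1; field_simp; ring
  rw [gev2Pdf, mul_div_mul_div_cancel hξ.ne' hσ.ne', hpow, rpow_neg_rpow_neg_one_div hξ.ne' ht.le]
  ring

lemma gev2ScoreSigma_div_mul_rpow_neg (hσ : 0 < σ) (hξ : 0 < ξ) (ht : 0 < t) :
    gev2ScoreSigma σ ξ (σ / ξ * t ^ (-ξ)) = (1 - t) / (ξ * σ) := by
  rw [gev2ScoreSigma, mul_div_mul_div_cancel hξ.ne' hσ.ne', rpow_neg_rpow_neg_one_div hξ.ne' ht.le]
  ring

lemma gev2ScoreXi_div_mul_rpow_neg (hσ : 0 < σ) (hξ : 0 < ξ) (ht : 0 < t) :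
    gev2ScoreXi σ ξ (σ / ξ * t ^ (-ξ)) = ((-ξ * log t - 1) * (1 - t) - ξ) / ξ ^ 2 := by
  rw [gev2ScoreXi, mul_div_mul_div_cancel hξ.ne' hσ.ne', rpow_neg_rpow_neg_one_div hξ.ne' ht.le,
    log_rpow ht]
  field_simp

end Standardization

lemma setIntegral_mul_gev2Pdf {σ ξ : ℝ} (hσ : 0 < σ) (hξ : 0 < ξ) (F : ℝ → ℝ) :
    ∫ x in Ioi 0, F x * gev2Pdf σ ξ x = ∫ t in Ioi 0, F (σ / ξ * t ^ (-ξ)) * exp (-t) := by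
  have hscale := integral_comp_mul_left_Ioi' (fun x => F x * gev2Pdf σ ξ x) 0 (div_pos hσ hξ)
  have hpow := integral_comp_rpow_Ioi (fun y => F (σ / ξ * y) * gev2Pdf σ ξ (σ / ξ * y))
    (neg_ne_zero.2 hξ.ne')
  rw [mul_zero] at hscale
  rw [← hscale, ← hpow, smul_eq_mul, ← integral_const_mul]
  refine setIntegral_congr_fun measurableSet_Ioi fun t ht => ?_
  have ht : 0 < t := ht
  rw [smul_eq_mul, gev2Pdf_div_mul_rpow_neg hσ hξ ht, abs_neg, abs_of_pos hξ,
    show -ξ - 1 = -(ξ + 1) by ring, rpow_neg ht.le]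
  field_simp

theorem gev2_fisher_sigma_xi (σ ξ : ℝ) (hσ : 0 < σ) (hξ : 0 < ξ) :
    ∫ x in Set.Ioi (0 : ℝ), gev2ScoreSigma σ ξ x * gev2ScoreXi σ ξ x * gev2Pdf σ ξ x
      = -(1 - Real.eulerMascheroniConstant) / (σ * ξ ^ 2) - 1 / (σ * ξ ^ 3) := by
  set p : Fin 3 → ℝ := ![(-1 - ξ) / (σ * ξ ^ 3), (2 + ξ) / (σ * ξ ^ 3), -1 / (σ * ξ ^ 3)]
  set q : Fin 3 → ℝ := ![-1 / (σ * ξ ^ 2), 2 / (σ * ξ ^ 2), -1 / (σ * ξ ^ 2)]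
  have hexpand : ∀ t ∈ Ioi (0 : ℝ),
      gev2ScoreSigma σ ξ (σ / ξ * t ^ (-ξ)) * gev2ScoreXi σ ξ (σ / ξ * t ^ (-ξ)) * exp (-t)
        = (∑ i, p i * t ^ (i : ℕ)) * exp (-t) + (∑ i, q i * t ^ (i : ℕ)) * log t * exp (-t) := by
    intro t ht
    rw [gev2ScoreSigma_div_mul_rpow_neg hσ hξ ht, gev2ScoreXi_div_mul_rpow_neg hσ hξ ht]
    simp only [p, q, Fin.sum_univ_three, Matrix.cons_val, Fin.val_zero, Fin.val_one, Fin.val_two]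
    field_simp
    ring
  rw [setIntegral_mul_gev2Pdf hσ hξ, setIntegral_congr_fun measurableSet_Ioi hexpand,
    integral_add (integrableOn_sum_pow_mul_exp_neg p) (integrableOn_sum_pow_mul_log_mul_exp_neg q),
    integral_sum_pow_mul_exp_neg, integral_sum_pow_mul_log_mul_exp_neg]
  simp only [p, q, Fin.sum_univ_three, Matrix.cons_val, Fin.val_zero, Fin.val_one, Fin.val_two,
    Nat.factorial_zero, Nat.factorial_one, Nat.factorial_two, harmonic_zero, harmonic_succ]
  push_cast
  field_simp
  ring
end

section
/- Let σ > 0 and ξ > 0. Then the Fisher information cross entry i_{σξ} of the GP(σ,ξ) distribution satisfies ∫_0^∞ s_σ(x;σ,ξ) · s_ξ(x;σ,ξ) · f(x;σ,ξ) dx = 1/(σ·(1+ξ)(1+2ξ)). -/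
/-!
In the variable `y = 1 + ξ x / σ` the scores are `s_σ = (1 - (1 + ξ) / y) / (σ ξ)` and
`s_ξ = (log y - (1 + ξ) (1 - 1 / y)) / ξ²`, and the density is `σ⁻¹ y^(-(1 + 1/ξ))`. After the
affine substitution `x ↦ y` the integrand is therefore a combination of `y^(-p)` and
`y^(-p) log y` on `(1, ∞)` with `p ∈ {1 + 1/ξ, 2 + 1/ξ, 3 + 1/ξ}`, whose integrals are `1 / (p - 1)`
and `1 / (p - 1)²`.
-/

open MeasureTheory Real

/-- Density of the two-parameter Generalised Pareto distribution GP(σ,ξ), for x > 0. -/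
noncomputable def gpPdf (σ ξ x : ℝ) : ℝ :=
  (1 / σ) * (1 + ξ * x / σ) ^ (-1 - 1 / ξ)

/-- Score of the GP distribution with respect to the scale parameter σ. -/
noncomputable def gpScoreSigma (σ ξ x : ℝ) : ℝ :=
  -1 / σ + (1 + ξ) * x / (σ * (σ + ξ * x))

/-- Score of the GP distribution with respect to the shape parameter ξ. -/
noncomputable def gpScoreXi (σ ξ x : ℝ) : ℝ :=
  (1 / ξ ^ 2) * Real.log (1 + ξ * x / σ) - (1 + 1 / ξ) * x / (σ + ξ * x)

open Filter Set Topology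

theorem integral_comp_add_mul_Ioi {E : Type*} [NormedAddCommGroup E] [NormedSpace ℝ E]
    (g : ℝ → E) (a b : ℝ) {c : ℝ} (hc : 0 < c) :
    ∫ x in Ioi a, g (b + c * x) = c⁻¹ • ∫ y in Ioi (b + c * a), g y := by
  have himage : (fun x => b + c * x) '' Ioi a = Ioi (b + c * a) := by
    rw [← image_const_add_Ioi, ← image_mul_left_Ioi hc, image_image]
  have hderiv : ∀ x ∈ Ioi a, HasDerivWithinAt (fun x => b + c * x) c (Ioi a) x := fun x _ => by
    simpa using (((hasDerivAt_id x).const_mul c).const_add b).hasDerivWithinAt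
  have hinj : InjOn (fun x => b + c * x) (Ioi a) := fun x _ y _ h => by
    simpa [hc.ne'] using h
  rw [← himage, integral_image_eq_integral_abs_deriv_smul measurableSet_Ioi hderiv hinj,
    integral_smul, abs_of_pos hc, inv_smul_smul₀ hc.ne']

theorem tendsto_rpow_neg_mul_log_atTop {r : ℝ} (hr : 0 < r) :
    Tendsto (fun y : ℝ => y ^ (-r) * log y) atTop (𝓝 0) := by
  refine (isLittleO_log_rpow_atTop hr).tendsto_div_nhds_zero.congr' ?_
  filter_upwards [eventually_gt_atTop 0] with y hy
  rw [rpow_neg hy.le, div_eq_inv_mul]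

theorem integral_Ioi_one_rpow_neg_mul_log {p : ℝ} (hp : 1 < p) :
    IntegrableOn (fun y : ℝ => y ^ (-p) * log y) (Ioi 1) ∧
      ∫ y in Ioi (1 : ℝ), y ^ (-p) * log y = 1 / (p - 1) ^ 2 := by
  have hr : 0 < p - 1 := sub_pos.mpr hp
  have hderiv : ∀ y ∈ Ici (1 : ℝ), HasDerivAt
      (fun y => -(y ^ (1 - p) * log y) / (p - 1) - y ^ (1 - p) / (p - 1) ^ 2)
      (y ^ (-p) * log y) y := by
    intro y hy
    have hy₀ : 0 < y := zero_lt_one.trans_le hy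
    have hpow := hasDerivAt_rpow_const (x := y) (p := 1 - p) (Or.inl hy₀.ne')
    refine (((hpow.mul (hasDerivAt_log hy₀.ne')).neg.div_const (p - 1)).sub
      (hpow.div_const ((p - 1) ^ 2))).congr_deriv ?_
    rw [show 1 - p - 1 = -p by ring, show y ^ (1 - p) = y ^ (-p) * y by
      rw [← rpow_add_one hy₀.ne']; ring_nf]
    field_simp
    ring
  have hnonneg : ∀ y ∈ Ioi (1 : ℝ), 0 ≤ y ^ (-p) * log y := fun y hy =>
    mul_nonneg (rpow_nonneg (zero_le_one.trans hy.le) _) (log_nonneg hy.le)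
  have hlim : Tendsto (fun y => -(y ^ (1 - p) * log y) / (p - 1) - y ^ (1 - p) / (p - 1) ^ 2)
      atTop (𝓝 (-0 / (p - 1) - 0 / (p - 1) ^ 2)) := by
    rw [show 1 - p = -(p - 1) by ring]
    exact ((tendsto_rpow_neg_mul_log_atTop hr).neg.div_const _).sub
      ((tendsto_rpow_neg_atTop hr).div_const _)
  refine ⟨integrableOn_Ioi_deriv_of_nonneg' hderiv hnonneg hlim, ?_⟩
  rw [integral_Ioi_of_hasDerivAt_of_nonneg' hderiv hnonneg hlim]
  simp

theorem integral_Ioi_one_rpow_neg_mul_affine_log {p : ℝ} (hp : 1 < p) (a b : ℝ) :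
    IntegrableOn (fun y : ℝ => y ^ (-p) * (a + b * log y)) (Ioi 1) ∧
      ∫ y in Ioi (1 : ℝ), y ^ (-p) * (a + b * log y) = a / (p - 1) + b / (p - 1) ^ 2 := by
  have hlt : -p < -1 := neg_lt_neg hp
  have hpow := integrableOn_Ioi_rpow_of_lt hlt zero_lt_one
  obtain ⟨hlog, hlog_eq⟩ := integral_Ioi_one_rpow_neg_mul_log hp
  have hsplit : (fun y : ℝ => y ^ (-p) * (a + b * log y))
      = fun y => a * y ^ (-p) + b * (y ^ (-p) * log y) := by
    funext y; ring
  rw [hsplit]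
  refine ⟨(hpow.const_mul a).add (hlog.const_mul b), ?_⟩
  rw [integral_add (hpow.const_mul a) (hlog.const_mul b), integral_const_mul, integral_const_mul,
    hlog_eq, integral_Ioi_rpow_of_lt hlt zero_lt_one, one_rpow]
  have : 0 < p - 1 := sub_pos.mpr hp
  rw [show -p + 1 = -(p - 1) by ring]
  field_simp

theorem gpScoreSigma_eq {σ ξ x : ℝ} (hσ : σ ≠ 0) (hξ : ξ ≠ 0) (hx : 1 + ξ / σ * x ≠ 0) :
    gpScoreSigma σ ξ x = (1 - (1 + ξ) / (1 + ξ / σ * x)) / (σ * ξ) := by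
  have : σ + ξ * x ≠ 0 := by
    contrapose! hx; field_simp; linarith
  unfold gpScoreSigma
  field_simp
  ring

theorem gpScoreXi_eq {σ ξ x : ℝ} (hσ : σ ≠ 0) (hξ : ξ ≠ 0) (hx : 1 + ξ / σ * x ≠ 0) :
    gpScoreXi σ ξ x = (log (1 + ξ / σ * x) - (1 + ξ) * (1 - 1 / (1 + ξ / σ * x))) / ξ ^ 2 := by
  have : σ + ξ * x ≠ 0 := by
    contrapose! hx; field_simp; linarith
  unfold gpScoreXi
  rw [div_mul_eq_mul_div]
  field_simp
  ring

theorem gpPdf_eq (σ ξ x : ℝ) :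
    gpPdf σ ξ x = σ⁻¹ * (1 + ξ / σ * x) ^ (-(1 + ξ⁻¹)) := by
  rw [gpPdf, one_div, div_mul_eq_mul_div, show -1 - 1 / ξ = -(1 + ξ⁻¹) by ring]

noncomputable def gpCrossKernel (ξ y : ℝ) : ℝ :=
  y ^ (-(1 + ξ⁻¹)) * (-(1 + ξ) + log y)
    + y ^ (-(2 + ξ⁻¹)) * ((1 + ξ) * (2 + ξ) + -(1 + ξ) * log y)
    - (1 + ξ) ^ 2 * y ^ (-(3 + ξ⁻¹))

theorem gpScoreSigma_mul_gpScoreXi_mul_gpPdf {σ ξ x : ℝ} (hσ : 0 < σ) (hξ : 0 < ξ)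
    (hx : 0 ≤ x) :
    gpScoreSigma σ ξ x * gpScoreXi σ ξ x * gpPdf σ ξ x
      = (σ ^ 2 * ξ ^ 3)⁻¹ * gpCrossKernel ξ (1 + ξ / σ * x) := by
  have hy : 0 < 1 + ξ / σ * x := by positivity
  rw [gpScoreSigma_eq hσ.ne' hξ.ne' hy.ne', gpScoreXi_eq hσ.ne' hξ.ne' hy.ne', gpPdf_eq,
    gpCrossKernel]
  set y := 1 + ξ / σ * x
  have h2 : y ^ (-(2 + ξ⁻¹)) = y ^ (-(1 + ξ⁻¹)) / y := by
    rw [show -(2 + ξ⁻¹) = -(1 + ξ⁻¹) - 1 by ring, rpow_sub_one hy.ne']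
  have h3 : y ^ (-(3 + ξ⁻¹)) = y ^ (-(1 + ξ⁻¹)) / y ^ 2 := by
    rw [show -(3 + ξ⁻¹) = -(1 + ξ⁻¹) - 2 by ring, rpow_sub hy, rpow_two]
  rw [h2, h3]
  field_simp
  ring

theorem integral_gpCrossKernel {ξ : ℝ} (hξ : 0 < ξ) :
    ∫ y in Ioi (1 : ℝ), gpCrossKernel ξ y = ξ ^ 4 / ((1 + ξ) * (1 + 2 * ξ)) := by
  have hp : 1 < 1 + ξ⁻¹ := by simpa using inv_pos.mpr hξ
  obtain ⟨hint₁, heq₁⟩ := integral_Ioi_one_rpow_neg_mul_affine_log hp (-(1 + ξ)) 1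
  obtain ⟨hint₂, heq₂⟩ := integral_Ioi_one_rpow_neg_mul_affine_log (p := 2 + ξ⁻¹) (by linarith)
    ((1 + ξ) * (2 + ξ)) (-(1 + ξ))
  have hlt : -(3 + ξ⁻¹) < -1 := by linarith
  have hint₃ := (integrableOn_Ioi_rpow_of_lt hlt zero_lt_one).const_mul ((1 + ξ) ^ 2)
  simp only [one_mul] at hint₁ heq₁
  have hint₁₂ : IntegrableOn (fun y : ℝ => y ^ (-(1 + ξ⁻¹)) * (-(1 + ξ) + log y)
      + y ^ (-(2 + ξ⁻¹)) * ((1 + ξ) * (2 + ξ) + -(1 + ξ) * log y)) (Ioi 1) := hint₁.add hint₂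
  unfold gpCrossKernel
  rw [integral_sub hint₁₂ hint₃, integral_add hint₁ hint₂, heq₁, heq₂,
    integral_const_mul, integral_Ioi_rpow_of_lt hlt zero_lt_one, one_rpow,
    show 1 + ξ⁻¹ - 1 = ξ⁻¹ by ring, show 2 + ξ⁻¹ - 1 = (1 + ξ) / ξ by field_simp; ring,
    show -(3 + ξ⁻¹) + 1 = -((1 + 2 * ξ) / ξ) by field_simp; ring]
  have : 1 + 2 * ξ ≠ 0 := by positivity
  have : 1 + ξ ≠ 0 := by positivity
  field_simp
  ring

theorem gp_fisher_sigma_xi (σ ξ : ℝ) (hσ : 0 < σ) (hξ : 0 < ξ) :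
    ∫ x in Set.Ioi (0 : ℝ), gpScoreSigma σ ξ x * gpScoreXi σ ξ x * gpPdf σ ξ x
      = 1 / (σ * (1 + ξ) * (1 + 2 * ξ)) := by
  calc ∫ x in Ioi (0 : ℝ), gpScoreSigma σ ξ x * gpScoreXi σ ξ x * gpPdf σ ξ x
      = ∫ x in Ioi (0 : ℝ), (σ ^ 2 * ξ ^ 3)⁻¹ * gpCrossKernel ξ (1 + ξ / σ * x) :=
        setIntegral_congr_fun measurableSet_Ioi fun x hx =>
          gpScoreSigma_mul_gpScoreXi_mul_gpPdf hσ hξ (le_of_lt hx)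
    _ = (σ ^ 2 * ξ ^ 3)⁻¹ * ((ξ / σ)⁻¹ * ∫ y in Ioi (1 : ℝ), gpCrossKernel ξ y) := by
        rw [integral_const_mul, integral_comp_add_mul_Ioi _ _ _ (by positivity), mul_zero,
          add_zero, smul_eq_mul]
    _ = 1 / (σ * (1 + ξ) * (1 + 2 * ξ)) := by
        rw [integral_gpCrossKernel hξ]
        field_simp
end
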